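/- Under the ROBE-Z setup, ROBE-Z has variance at most that of feature hashing: for all x, y ∈ ℝⁿ, V_Z(x,y,n,m) ≤ V_1(x,y,n,m), where V_Z is the variance of the ROBE-Z inner-product estimator with block size Z and V_1 is the variance of the estimator with block size 1 on the same vectors, dimension and memory size. -/

import Mathlib

open Finset

noncomputable section

/-- Sign value of a Boolean: `true ↦ +1`, `false ↦ -1`. -/
def sgn (b : Bool) : ℝ := if b then 1 else -1

/-- The block id of an index `i` is a valid index into `Fin (n / Z)`. -/
theorem blockLt {n Z : ℕ} (hdvd : Z ∣ n) (i : Fin n) : i.1 / Z < n / Z :=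
  Nat.div_lt_div_of_lt_of_dvd hdvd i.isLt

/-- ROBE-Z location map: `idx i = (h (⌊i/Z⌋) + (i mod Z)) mod m`. -/
def idx (n m Z : ℕ) (hdvd : Z ∣ n) (h : Fin (n / Z) → Fin m) (i : Fin n) : ℕ :=
  ((h ⟨i.1 / Z, blockLt hdvd i⟩).1 + i.1 % Z) % m

/-- The ROBE-Z inner-product estimator `Ŝ(x,y)`, as a function of the random
sample `ω = (h, g)` drawn from the (finite) product space. -/
def est (n m Z : ℕ) (hdvd : Z ∣ n) (x y : Fin n → ℝ)
    (ω : (Fin (n / Z) → Fin m) × (Fin n → Bool)) : ℝ :=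
  ∑ j : Fin m,
    (∑ i : Fin n, x i * sgn (ω.2 i) * (if idx n m Z hdvd ω.1 i = j.1 then 1 else 0)) *
    (∑ i : Fin n, y i * sgn (ω.2 i) * (if idx n m Z hdvd ω.1 i = j.1 then 1 else 0))

/-- Expectation with respect to the uniform (product) measure on the finite
sample space of pairs `(h, g)`. -/
def expec (n m Z : ℕ) (f : ((Fin (n / Z) → Fin m) × (Fin n → Bool)) → ℝ) : ℝ :=
  (∑ ω : (Fin (n / Z) → Fin m) × (Fin n → Bool), f ω) /
    (Fintype.card ((Fin (n / Z) → Fin m) × (Fin n → Bool)))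

/-- Variance `V_Z(x,y,n,m)` of the ROBE-Z inner-product estimator. -/
def varZ (n m Z : ℕ) (hdvd : Z ∣ n) (x y : Fin n → ℝ) : ℝ :=
  expec n m Z (fun ω => (est n m Z hdvd x y ω) ^ 2) -
    (expec n m Z (est n m Z hdvd x y)) ^ 2

/-- The feature-hashing (block size 1) inner-product estimator, with location
map `idx i = h i`. -/
def est1 (n m : ℕ) (x y : Fin n → ℝ)
    (ω : (Fin n → Fin m) × (Fin n → Bool)) : ℝ :=
  ∑ j : Fin m,
    (∑ i : Fin n, x i * sgn (ω.2 i) * (if ω.1 i = j then 1 else 0)) *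
    (∑ i : Fin n, y i * sgn (ω.2 i) * (if ω.1 i = j then 1 else 0))

/-- Expectation for the feature-hashing sample space. -/
def expec1 (n m : ℕ) (f : ((Fin n → Fin m) × (Fin n → Bool)) → ℝ) : ℝ :=
  (∑ ω : (Fin n → Fin m) × (Fin n → Bool), f ω) /
    (Fintype.card ((Fin n → Fin m) × (Fin n → Bool)))

/-- Variance `V_1(x,y,n,m)` of the feature-hashing estimator. -/
def var1 (n m : ℕ) (x y : Fin n → ℝ) : ℝ :=
  expec1 n m (fun ω => (est1 n m x y ω) ^ 2) - (expec1 n m (est1 n m x y)) ^ 2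

/-!
For a fixed location map the estimator expands as
`∑ᵢ xᵢ yᵢ + ∑_{i<j} (xᵢ yⱼ + xⱼ yᵢ) [i, j collide] σᵢ σⱼ` with `σᵢ = sgn (g i)`, and the
sign products `σᵢ σⱼ` (`i < j`) are orthonormal with mean zero. Averaging over the hash too,
the variance of such a sign sketch is `∑_{i<j} (xᵢ yⱼ + xⱼ yᵢ)² P(i, j collide)`: only
collision probabilities depend on the scheme. Under feature hashing distinct indices collide
with probability `1/m`. Under ROBE-Z two indices in different blocks collide with probability
`1/m`, their block hashes being independent and uniform, and two distinct indices in one block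
never collide, since their offsets differ by less than `Z ≤ m`.
-/

open scoped BigOperators

lemma sgn_mul_self (b : Bool) : sgn b * sgn b = 1 := by cases b <;> simp [sgn]

lemma sgn_not (b : Bool) : sgn (!b) = -sgn b := by cases b <;> simp [sgn]

section Signs

variable {ι : Type*} [Fintype ι] [DecidableEq ι]

-- Flipping the `i`-th sign permutes the sample space and negates the summand.
lemma expect_sgn_mul_eq_zero (i : ι) {F : (ι → Bool) → ℝ}
    (hF : ∀ g b, F (Function.update g i b) = F g) :
    𝔼 g, sgn (g i) * F g = 0 := by
  have hflip : Function.Involutive fun g : ι → Bool => Function.update g i !(g i) := by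
    intro g; simp
  have := Fintype.expect_equiv (hflip.toPerm _) (fun g => sgn (g i) * F g)
    (fun g => -(sgn (g i) * F g)) (fun g => by simp [sgn_not, hF])
  rw [Finset.expect_neg_distrib] at this
  linarith

lemma expect_sgn_mul_sgn (i j : ι) :
    𝔼 g : ι → Bool, sgn (g i) * sgn (g j) = if i = j then 1 else 0 := by
  split_ifs with hij
  · simp [hij, sgn_mul_self]
  · exact expect_sgn_mul_eq_zero i fun g b => by simp [Function.update_of_ne (Ne.symm hij)]

end Signs

section SignPairs

variable {ι : Type*} [Fintype ι] [LinearOrder ι]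

lemma expect_sgn_pair_mul_sgn_pair {i j k l : ι} (hij : i < j) (hkl : k < l) :
    𝔼 g : ι → Bool, sgn (g i) * sgn (g j) * (sgn (g k) * sgn (g l)) =
      if i = k ∧ j = l then 1 else 0 := by
  rcases lt_trichotomy i k with hik | rfl | hki
  · rw [if_neg (by rintro ⟨rfl, -⟩; exact hik.false)]
    simp_rw [mul_assoc]
    exact expect_sgn_mul_eq_zero i fun g b => by
      simp [Function.update_of_ne hij.ne', Function.update_of_ne hik.ne',
        Function.update_of_ne (hik.trans hkl).ne']
  · have hsq : ∀ g : ι → Bool, sgn (g i) * sgn (g j) * (sgn (g i) * sgn (g l)) =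
        sgn (g j) * sgn (g l) := fun g => by
      linear_combination (sgn (g j) * sgn (g l)) * sgn_mul_self (g i)
    simp_rw [hsq, expect_sgn_mul_sgn, true_and]
  · rw [if_neg (by rintro ⟨rfl, -⟩; exact hki.false)]
    have hrot : ∀ g : ι → Bool, sgn (g i) * sgn (g j) * (sgn (g k) * sgn (g l)) =
        sgn (g k) * (sgn (g l) * (sgn (g i) * sgn (g j))) := fun g => by ring
    simp_rw [hrot]
    exact expect_sgn_mul_eq_zero k fun g b => by
      simp [Function.update_of_ne hkl.ne', Function.update_of_ne hki.ne',
        Function.update_of_ne (hki.trans hij).ne']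

lemma expect_sum_sgn_pairs (a : ι × ι → ℝ) :
    𝔼 g : ι → Bool, ∑ p : ι × ι with p.1 < p.2, a p * (sgn (g p.1) * sgn (g p.2)) = 0 := by
  rw [Finset.expect_sum_comm]
  refine Finset.sum_eq_zero fun p hp => ?_
  rw [← Finset.mul_expect, expect_sgn_mul_sgn, if_neg (Finset.mem_filter.1 hp).2.ne, mul_zero]

lemma expect_sq_sum_sgn_pairs (a : ι × ι → ℝ) :
    𝔼 g : ι → Bool, (∑ p : ι × ι with p.1 < p.2, a p * (sgn (g p.1) * sgn (g p.2))) ^ 2 =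
      ∑ p : ι × ι with p.1 < p.2, a p ^ 2 := by
  simp_rw [sq, Finset.sum_mul_sum, Finset.expect_sum_comm]
  refine Finset.sum_congr rfl fun p hp => ?_
  have hpq : ∀ q ∈ ({q | q.1 < q.2} : Finset (ι × ι)), 𝔼 g : ι → Bool,
      a p * (sgn (g p.1) * sgn (g p.2)) * (a q * (sgn (g q.1) * sgn (g q.2))) =
        if p = q then a p * a q else 0 := fun q hq => by
    simp_rw [mul_mul_mul_comm (a p), ← Finset.mul_expect,
      expect_sgn_pair_mul_sgn_pair (Finset.mem_filter.1 hp).2 (Finset.mem_filter.1 hq).2,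
      Prod.ext_iff]
    simp
  rw [Finset.sum_congr rfl hpq, Finset.sum_ite_eq, if_pos hp]

end SignPairs

lemma sum_sum_eq_sum_diag_add_sum_lt {ι M : Type*} [Fintype ι] [LinearOrder ι] [AddCommMonoid M]
    (f : ι → ι → M) :
    ∑ i, ∑ j, f i j = ∑ i, f i i + ∑ p : ι × ι with p.1 < p.2, (f p.1 p.2 + f p.2 p.1) := by
  have hswap : ∑ p : ι × ι with p.1 < p.2, f p.2 p.1 = ∑ p : ι × ι with p.2 < p.1, f p.1 p.2 :=
    Finset.sum_nbij' Prod.swap Prod.swap (by simp) (by simp) (by simp) (by simp) (by simp)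
  have hdiag : ∑ i, f i i = ∑ p : ι × ι with p.1 = p.2, f p.1 p.2 := by
    rw [Finset.sum_filter, Fintype.sum_prod_type]
    simp
  rw [Finset.sum_add_distrib, hswap, hdiag, ← Fintype.sum_prod_type', Finset.sum_filter,
    Finset.sum_filter, Finset.sum_filter, ← Finset.sum_add_distrib, ← Finset.sum_add_distrib]
  refine Finset.sum_congr rfl fun p _ => ?_
  rcases lt_trichotomy p.1 p.2 with h | h | h
  · simp [h, h.ne, h.not_gt]
  · simp [h]
  · simp [h, h.ne', h.not_gt]

section Sketch

variable {ι β : Type*} [Fintype ι] [Fintype β] [DecidableEq β]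

def signSketch (L : ι → β) (x y : ι → ℝ) (g : ι → Bool) : ℝ :=
  ∑ j, (∑ i, x i * sgn (g i) * (if L i = j then 1 else 0)) *
    (∑ i, y i * sgn (g i) * (if L i = j then 1 else 0))

lemma signSketch_eq_sum_sum (L : ι → β) (x y : ι → ℝ) (g : ι → Bool) :
    signSketch L x y g =
      ∑ i, ∑ j, x i * y j * (sgn (g i) * sgn (g j)) * (if L i = L j then 1 else 0) := by
  simp only [signSketch, Finset.sum_mul_sum]
  rw [Finset.sum_comm]
  refine Finset.sum_congr rfl fun i _ => ?_
  rw [Finset.sum_comm]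
  refine Finset.sum_congr rfl fun j _ => ?_
  simp only [eq_comm, mul_ite, mul_one, mul_zero, ite_mul, zero_mul, sum_ite_eq', mem_univ,
    ↓reduceIte]
  split_ifs <;> ring

lemma signSketch_eq [LinearOrder ι] (L : ι → β) (x y : ι → ℝ) (g : ι → Bool) :
    signSketch L x y g = ∑ i, x i * y i + ∑ p : ι × ι with p.1 < p.2,
      (x p.1 * y p.2 + x p.2 * y p.1) * (if L p.1 = L p.2 then 1 else 0) *
        (sgn (g p.1) * sgn (g p.2)) := by
  rw [signSketch_eq_sum_sum, sum_sum_eq_sum_diag_add_sum_lt]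
  congr 1
  · simp [sgn_mul_self]
  · refine Finset.sum_congr rfl fun p _ => ?_
    simp only [eq_comm (a := L p.2)]
    ring

lemma expect_signSketch [LinearOrder ι] (L : ι → β) (x y : ι → ℝ) :
    𝔼 g, signSketch L x y g = ∑ i, x i * y i := by
  simp_rw [signSketch_eq, Finset.expect_add_distrib, Fintype.expect_const,
    expect_sum_sgn_pairs, add_zero]

lemma expect_signSketch_sq [LinearOrder ι] (L : ι → β) (x y : ι → ℝ) :
    𝔼 g, signSketch L x y g ^ 2 = (∑ i, x i * y i) ^ 2 + ∑ p : ι × ι with p.1 < p.2,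
      (x p.1 * y p.2 + x p.2 * y p.1) ^ 2 * (if L p.1 = L p.2 then 1 else 0) := by
  simp_rw [signSketch_eq, add_sq, Finset.expect_add_distrib, Fintype.expect_const,
    ← Finset.mul_expect, expect_sum_sgn_pairs, expect_sq_sum_sgn_pairs, mul_zero, add_zero]
  congr 1
  refine Finset.sum_congr rfl fun p _ => ?_
  split_ifs <;> ring

end Sketch

lemma Fintype.expect_prod_type {α β M : Type*} [Fintype α] [Fintype β] [AddCommMonoid M]
    [Module ℚ≥0 M] (f : α × β → M) : 𝔼 ω, f ω = 𝔼 a, 𝔼 b, f (a, b) := by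
  rw [← Finset.univ_product_univ, Finset.expect_product]

section Hashed

variable {H ι β : Type*} [Fintype H] [Fintype ι] [Fintype β] [DecidableEq β]

def collisionProb (L : H → ι → β) (i j : ι) : ℝ :=
  𝔼 h, if L h i = L h j then 1 else 0

lemma expect_sq_sub_sq_expect_signSketch [Nonempty H] [LinearOrder ι] (L : H → ι → β)
    (x y : ι → ℝ) :
    𝔼 ω : H × (ι → Bool), signSketch (L ω.1) x y ω.2 ^ 2 -
        (𝔼 ω : H × (ι → Bool), signSketch (L ω.1) x y ω.2) ^ 2 =
      ∑ p : ι × ι with p.1 < p.2,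
        (x p.1 * y p.2 + x p.2 * y p.1) ^ 2 * collisionProb L p.1 p.2 := by
  simp_rw [Fintype.expect_prod_type, expect_signSketch_sq,
    expect_signSketch, Finset.expect_add_distrib, Fintype.expect_const, Finset.expect_sum_comm,
    ← Finset.mul_expect, collisionProb, add_sub_cancel_left]

end Hashed

lemma expect_expect_update {B α M : Type*} [Fintype B] [DecidableEq B] [Fintype α] [Nonempty α]
    [AddCommMonoid M] [Module ℚ≥0 M] (F : (B → α) → M) (b : B) :
    𝔼 h, 𝔼 u, F (Function.update h b u) = 𝔼 h, F h := by
  -- `(h, u) ↦ (update h b u, h b)` is an involution of `(B → α) × α`.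
  have hswap : Function.Involutive fun q : (B → α) × α => (Function.update q.1 b q.2, q.1 b) := by
    intro q; simp
  calc 𝔼 h, 𝔼 u, F (Function.update h b u)
      = 𝔼 q : (B → α) × α, F (Function.update q.1 b q.2) := by
        rw [Fintype.expect_prod_type]
    _ = 𝔼 q : (B → α) × α, F q.1 :=
        Fintype.expect_equiv (hswap.toPerm _) _ _ fun q => by simp
    _ = 𝔼 h, F h := by simp_rw [Fintype.expect_prod_type, Fintype.expect_const]

lemma expect_ite_apply_add_eq_apply_add {B G : Type*} [Fintype B] [DecidableEq B] [AddGroup G]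
    [Fintype G] [DecidableEq G] {b b' : B} (hb : b ≠ b') (r r' : G) :
    𝔼 h : B → G, (if h b + r = h b' + r' then (1 : ℝ) else 0) = 1 / Fintype.card G := by
  rw [← expect_expect_update _ b]
  simp_rw [Function.update_self, Function.update_of_ne hb.symm, ← eq_sub_iff_add_eq,
    Fintype.expect_eq_sum_div_card (fun u : G => if u = _ then (1 : ℝ) else 0)]
  simp

def robeLoc (n m Z : ℕ) [NeZero m] (hdvd : Z ∣ n) (h : Fin (n / Z) → Fin m) (i : Fin n) : Fin m :=
  h ⟨i.1 / Z, blockLt hdvd i⟩ + Fin.ofNat m (i.1 % Z)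

lemma est1_eq_signSketch {n m : ℕ} (x y : Fin n → ℝ) (ω : (Fin n → Fin m) × (Fin n → Bool)) :
    est1 n m x y ω = signSketch ω.1 x y ω.2 := rfl

section Robe

variable {n m Z : ℕ} [NeZero m]

lemma val_robeLoc (hdvd : Z ∣ n) (h : Fin (n / Z) → Fin m) (i : Fin n) :
    (robeLoc n m Z hdvd h i : ℕ) = idx n m Z hdvd h i := by
  simp [robeLoc, idx, Fin.val_add]

lemma est_eq_signSketch (hdvd : Z ∣ n) (x y : Fin n → ℝ)
    (ω : (Fin (n / Z) → Fin m) × (Fin n → Bool)) :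
    est n m Z hdvd x y ω = signSketch (robeLoc n m Z hdvd ω.1) x y ω.2 := by
  simp only [est, signSketch, ← val_robeLoc, Fin.val_inj]

lemma varZ_eq (hdvd : Z ∣ n) (x y : Fin n → ℝ) :
    varZ n m Z hdvd x y = ∑ p : Fin n × Fin n with p.1 < p.2,
      (x p.1 * y p.2 + x p.2 * y p.1) ^ 2 * collisionProb (robeLoc n m Z hdvd) p.1 p.2 := by
  simp only [varZ, expec, ← Fintype.expect_eq_sum_div_card, est_eq_signSketch]
  exact expect_sq_sub_sq_expect_signSketch _ x y

lemma var1_eq (x y : Fin n → ℝ) :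
    var1 n m x y = ∑ p : Fin n × Fin n with p.1 < p.2,
      (x p.1 * y p.2 + x p.2 * y p.1) ^ 2 *
        collisionProb (fun h : Fin n → Fin m => h) p.1 p.2 := by
  simp only [var1, expec1, ← Fintype.expect_eq_sum_div_card, est1_eq_signSketch]
  exact expect_sq_sub_sq_expect_signSketch (fun h : Fin n → Fin m => h) x y

lemma collisionProb_featureHashing {i j : Fin n} (hij : i ≠ j) :
    collisionProb (fun h : Fin n → Fin m => h) i j = 1 / m := by
  simpa [collisionProb] using expect_ite_apply_add_eq_apply_add (G := Fin m) hij 0 0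

lemma robeLoc_ne_of_div_eq (hZ : 0 < Z) (hZm : Z ≤ m) (hdvd : Z ∣ n) (h : Fin (n / Z) → Fin m)
    {i j : Fin n} (hij : i ≠ j) (hblock : i.1 / Z = j.1 / Z) :
    robeLoc n m Z hdvd h i ≠ robeLoc n m Z hdvd h j := by
  have hlt : ∀ k : Fin n, k.1 % Z < m := fun k => (Nat.mod_lt _ hZ).trans_le hZm
  intro heq
  simp only [robeLoc, hblock, add_right_inj] at heq
  have hmod : i.1 % Z = j.1 % Z := by
    simpa [Fin.ext_iff, Nat.mod_eq_of_lt (hlt i), Nat.mod_eq_of_lt (hlt j)] using heq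
  exact hij (Fin.ext (by rw [← Nat.div_add_mod i.1 Z, ← Nat.div_add_mod j.1 Z, hblock, hmod]))

lemma collisionProb_robeLoc_le (hZ : 0 < Z) (hZm : Z ≤ m) (hdvd : Z ∣ n) {i j : Fin n}
    (hij : i ≠ j) : collisionProb (robeLoc n m Z hdvd) i j ≤ 1 / m := by
  by_cases hblock : i.1 / Z = j.1 / Z
  · have hzero : collisionProb (robeLoc n m Z hdvd) i j = 0 :=
      Finset.expect_eq_zero fun h _ => if_neg (robeLoc_ne_of_div_eq hZ hZm hdvd h hij hblock)
    rw [hzero]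
    positivity
  · have hb : (⟨i.1 / Z, blockLt hdvd i⟩ : Fin (n / Z)) ≠ ⟨j.1 / Z, blockLt hdvd j⟩ :=
      fun h => hblock (Fin.val_eq_of_eq h)
    exact (expect_ite_apply_add_eq_apply_add (G := Fin m) hb _ _).trans_le (by simp)

end Robe

theorem robe_variance_le_feature_hashing_general (n m Z : ℕ) (hm : 0 < m)
    (hZ : 0 < Z) (hdvd : Z ∣ n) (hZm : Z ≤ m) (x y : Fin n → ℝ) :
    varZ n m Z hdvd x y ≤ var1 n m x y := by
  have : NeZero m := ⟨hm.ne'⟩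
  rw [varZ_eq, var1_eq]
  refine Finset.sum_le_sum fun p hp => mul_le_mul_of_nonneg_left ?_ (sq_nonneg _)
  have hp : p.1 ≠ p.2 := (Finset.mem_filter.1 hp).2.ne
  exact (collisionProb_robeLoc_le hZ hZm hdvd hp).trans_eq (collisionProb_featureHashing hp).symm

/-- ROBE-Z has variance at most that of feature hashing:
`V_Z(x,y,n,m) ≤ V_1(x,y,n,m)`. -/
theorem robe_variance_le_feature_hashing (n m Z : ℕ) (hn : 0 < n) (hm : 0 < m)
    (hZ : 0 < Z) (hdvd : Z ∣ n) (hZm : Z ≤ m) (hmn : m ≤ n) (x y : Fin n → ℝ) :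
    varZ n m Z hdvd x y ≤ var1 n m x y :=
  robe_variance_le_feature_hashing_general n m Z hm hZ hdvd hZm x y
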